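/- For 0 < w ≤ 1/2, the joint density g on [0,1]² defined piecewise by: g(a,b) = 1/(1−w) for a ∈ [0,w], b ∈ (w,1]; g(a,b) = 1/(1−w) for a ∈ (w,1], b ∈ [0,w]; g(a,b) = (1 − 2w)/(1−w)² for a,b ∈ (w,1]; and g(a,b) = 0 for a,b ∈ [0,w], is a valid probability density whose marginals are each uniform on [0,1], and it satisfies P(B > w | A = a) = 1 for every a ∈ [0,w]. -/

import Mathlib

open intervalIntegral

/-- The piecewise joint density of a purely-sufficient cost structure. -/
noncomputable def gdens (w a b : ℝ) : ℝ :=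
  if a ≤ w then (if b ≤ w then 0 else 1 / (1 - w))
  else (if b ≤ w then 1 / (1 - w) else (1 - 2 * w) / (1 - w) ^ 2)

open MeasureTheory Set in
lemma step_ii (c1 c2 w a b : ℝ) :
    IntervalIntegrable (fun x => if x ≤ w then c1 else c2) volume a b := by
  have h : (fun x : ℝ => if x ≤ w then c1 else c2)
      = fun x => (Set.Iic w).indicator (fun _ => c1 - c2) x + c2 := by
    funext x
    by_cases h : x ≤ w <;> simp [Set.indicator, h]
  rw [h]
  apply IntervalIntegrable.add _ intervalIntegrable_const
  rw [intervalIntegrable_iff]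
  exact (IntegrableOn.indicator ((integrableOn_const_iff).mpr (Or.inr measure_Ioc_lt_top))
    measurableSet_Iic)

open MeasureTheory Set in
lemma step_left (c1 c2 w : ℝ) (h0 : 0 ≤ w) :
    (∫ x in (0:ℝ)..w, if x ≤ w then c1 else c2) = c1 * w := by
  rw [integral_congr (g := fun _ => c1)]
  · simp [mul_comm]
  · intro x hx
    rw [uIcc_of_le h0] at hx
    simp [hx.2]

open MeasureTheory Set in
lemma step_right (c1 c2 w : ℝ) (h1 : w ≤ 1) :
    (∫ x in w..(1:ℝ), if x ≤ w then c1 else c2) = c2 * (1 - w) := by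
  rw [intervalIntegral.integral_congr_ae (g := fun _ => c2)]
  · simp [mul_comm]
  · filter_upwards with x hx
    rw [uIoc_of_le h1] at hx
    simp [not_le.mpr hx.1]

open MeasureTheory Set in
lemma step_int (c1 c2 w : ℝ) (h0 : 0 ≤ w) (h1 : w ≤ 1) :
    (∫ x in (0:ℝ)..1, if x ≤ w then c1 else c2) = c1 * w + c2 * (1 - w) := by
  rw [← integral_add_adjacent_intervals (step_ii c1 c2 w 0 w) (step_ii c1 c2 w w 1),
    step_left c1 c2 w h0, step_right c1 c2 w h1]

/-- For `0 < w ≤ 1/2`, the piecewise density `gdens w` on `[0,1]²` is a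
valid probability density with both marginals uniform on `[0,1]`, and it satisfies
`P(B > w | A = a) = 1` for every `a ∈ [0,w]` (the conditional mass on `(w,1]` is `1`,
and the conditional mass on `[0,w]` is `0`). -/
theorem stmt_18 (w : ℝ) (hw0 : 0 < w) (hw : w ≤ 1/2) :
    (∀ a ∈ Set.Icc (0:ℝ) 1, ∀ b ∈ Set.Icc (0:ℝ) 1, 0 ≤ gdens w a b) ∧
    (∫ a in (0:ℝ)..1, ∫ b in (0:ℝ)..1, gdens w a b) = 1 ∧
    (∀ a ∈ Set.Icc (0:ℝ) 1, (∫ b in (0:ℝ)..1, gdens w a b) = 1) ∧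
    (∀ b ∈ Set.Icc (0:ℝ) 1, (∫ a in (0:ℝ)..1, gdens w a b) = 1) ∧
    (∀ a ∈ Set.Icc (0:ℝ) w,
      (∫ b in w..1, gdens w a b) = 1 ∧ (∫ b in (0:ℝ)..w, gdens w a b) = 0) := by
  have hw1 : w < 1 := lt_of_le_of_lt hw (by norm_num)
  have h1w : (0:ℝ) < 1 - w := by linarith
  have hne : (1:ℝ) - w ≠ 0 := ne_of_gt h1w
  have h2w : (0:ℝ) ≤ 1 - 2 * w := by linarith
  have hw0' : (0:ℝ) ≤ w := le_of_lt hw0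
  have hw1' : w ≤ 1 := le_of_lt hw1
  -- inner integral in b is 1 for every a
  have hinner : ∀ a : ℝ, (∫ b in (0:ℝ)..1, gdens w a b) = 1 := by
    intro a
    unfold gdens
    by_cases ha : a ≤ w
    · simp only [ha, if_true]
      rw [step_int 0 (1 / (1 - w)) w hw0' hw1']
      field_simp
      ring
    · simp only [ha, if_false]
      rw [step_int (1 / (1 - w)) ((1 - 2 * w) / (1 - w) ^ 2) w hw0' hw1']
      field_simp
      ring
  -- integral in a is 1 for every b
  have houter : ∀ b : ℝ, (∫ a in (0:ℝ)..1, gdens w a b) = 1 := by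
    intro b
    unfold gdens
    by_cases hb : b ≤ w
    · simp only [hb, if_true]
      rw [step_int 0 (1 / (1 - w)) w hw0' hw1']
      field_simp
      ring
    · simp only [hb, if_false]
      rw [step_int (1 / (1 - w)) ((1 - 2 * w) / (1 - w) ^ 2) w hw0' hw1']
      field_simp
      ring
  refine ⟨?_, ?_, fun a _ => hinner a, fun b _ => houter b, ?_⟩
  · intro a _ b _
    unfold gdens
    by_cases ha : a ≤ w <;> by_cases hb : b ≤ w <;>
      simp [ha, hb] <;> first | positivity | linarith
  · rw [intervalIntegral.integral_congr (g := fun _ => (1:ℝ)) (fun a _ => hinner a)]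
    simp
  · intro a ha
    constructor
    · unfold gdens
      simp only [ha.2, if_true]
      rw [step_right 0 (1 / (1 - w)) w hw1']
      field_simp
    · unfold gdens
      simp only [ha.2, if_true]
      rw [step_left 0 (1 / (1 - w)) w hw0']
      ring
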